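/- Let A : Fin N → Fin N → Prop be a symmetric, irreflexive adjacency relation on N nodes. Suppose there are a natural number M ≥ 3 and an injective map ι : Fin M → Fin N such that A (ι 0) (ι i) holds for every i ≠ 0 and A (ι i) (ι j) fails for all i ≠ j with i ≠ 0 and j ≠ 0 (i.e., the graph contains an induced (M−1)-star on M nodes). If there exists w : Fin N → ℝ^f (Euclidean inner product space) such that for all i ≠ j, A i j holds if and only if ⟪w i, w j⟫ > 0, then M + 1 ≤ 2·f. -/
import Mathlib

open scoped RealInnerProductSpace
open Finset

lemma linearIndependent_of_obtuse {E : Type*} [NormedAddCommGroup E]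
    [InnerProductSpace ℝ E] {κ : Type*} [Fintype κ] (v : κ → E) (c : E)
    (hpos : ∀ i, 0 < ⟪c, v i⟫)
    (hobt : ∀ i j, i ≠ j → ⟪v i, v j⟫ ≤ 0) :
    LinearIndependent ℝ v := by
  rw [Fintype.linearIndependent_iff]
  intro a ha i
  set g : κ → ℝ := fun i => max (a i) 0 with hg
  set h : κ → ℝ := fun i => max (-a i) 0 with hh
  have hgnn : ∀ i, 0 ≤ g i := fun i => le_max_right _ _
  have hhnn : ∀ i, 0 ≤ h i := fun i => le_max_right _ _
  have hgh : ∀ i, a i = g i - h i := by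
    intro i
    rcases le_total (a i) 0 with h' | h'
    · simp [hg, hh, max_eq_right h', max_eq_left (neg_nonneg.mpr h')]
    · simp [hg, hh, max_eq_left h', max_eq_right (neg_nonpos.mpr h')]
  have hmul : ∀ i, g i * h i = 0 := by
    intro i
    rcases le_total (a i) 0 with h' | h'
    · simp [hg, max_eq_right h']
    · simp [hh, max_eq_right (neg_nonpos.mpr h')]
  set x := ∑ i, g i • v i with hx
  set y := ∑ i, h i • v i with hy
  have hxy : x = y := by
    have hsub : x - y = ∑ i, a i • v i := by
      rw [hx, hy, ← Finset.sum_sub_distrib]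
      exact Finset.sum_congr rfl fun i _ => by rw [hgh i, sub_smul]
    rw [ha] at hsub
    exact sub_eq_zero.mp hsub
  have hip : ⟪x, y⟫ ≤ 0 := by
    rw [hx, hy, sum_inner]
    refine Finset.sum_nonpos fun i _ => ?_
    rw [real_inner_smul_left, inner_sum]
    rw [Finset.mul_sum]
    refine Finset.sum_nonpos fun j _ => ?_
    rw [real_inner_smul_right]
    rcases eq_or_ne i j with rfl | hne
    · have := hmul i
      nlinarith [real_inner_self_nonneg (x := v i)]
    · have h1 := hobt i j hne
      have := mul_nonneg (hgnn i) (hhnn j)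
      nlinarith
  have hx0 : x = 0 := by
    have : ⟪x, x⟫ ≤ 0 := by rw [hxy] at hip ⊢; exact hip
    exact real_inner_self_nonpos.mp this
  have hcx : ⟪c, x⟫ = 0 := by rw [hx0, inner_zero_right]
  have hcy : ⟪c, y⟫ = 0 := by rw [← hxy, hx0, inner_zero_right]
  have hgz : ∀ i, g i = 0 := by
    intro i
    have hsum : ∑ j, g j * ⟪c, v j⟫ = 0 := by
      rw [← hcx, hx, inner_sum]
      exact Finset.sum_congr rfl fun j _ => (real_inner_smul_right _ _ _).symm
    have hterm : ∀ j ∈ Finset.univ, 0 ≤ g j * ⟪c, v j⟫ :=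
      fun j _ => mul_nonneg (hgnn j) (hpos j).le
    have := (Finset.sum_eq_zero_iff_of_nonneg hterm).mp hsum i (Finset.mem_univ i)
    have := hpos i
    nlinarith [hgnn i]
  have hhz : ∀ i, h i = 0 := by
    intro i
    have hsum : ∑ j, h j * ⟪c, v j⟫ = 0 := by
      rw [← hcy, hy, inner_sum]
      exact Finset.sum_congr rfl fun j _ => (real_inner_smul_right _ _ _).symm
    have hterm : ∀ j ∈ Finset.univ, 0 ≤ h j * ⟪c, v j⟫ :=
      fun j _ => mul_nonneg (hhnn j) (hpos j).le
    have := (Finset.sum_eq_zero_iff_of_nonneg hterm).mp hsum i (Finset.mem_univ i)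
    have := hpos i
    nlinarith [hhnn i]
  rw [hgh i, hgz i, hhz i]; ring

theorem induced_star_rank_lower_bound
    (N M f : ℕ) (A : Fin N → Fin N → Prop)
    (hsymm : ∀ i j, A i j ↔ A j i) (hirrefl : ∀ i, ¬ A i i)
    (hM : 3 ≤ M) (ι : Fin M → Fin N) (hι : Function.Injective ι)
    (hcenter : ∀ i : Fin M, i ≠ ⟨0, by omega⟩ → A (ι ⟨0, by omega⟩) (ι i))
    (hleaves : ∀ i j : Fin M, i ≠ j → i ≠ ⟨0, by omega⟩ → j ≠ ⟨0, by omega⟩ →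
      ¬ A (ι i) (ι j))
    (w : Fin N → EuclideanSpace ℝ (Fin f))
    (hrep : ∀ i j, i ≠ j → (A i j ↔ ⟪w i, w j⟫ > 0)) :
    M + 1 ≤ 2 * f := by
  have hM0 : 0 < M := by omega
  set z : Fin M := ⟨0, hM0⟩ with hz
  set S := {i : Fin M // i ≠ z}
  set v : S → EuclideanSpace ℝ (Fin f) := fun i => w (ι i.1) with hv
  set c : EuclideanSpace ℝ (Fin f) := w (ι z) with hc
  have hpos : ∀ i : S, 0 < ⟪c, v i⟫ := by
    intro i
    have hne : ι z ≠ ι i.1 := fun h => i.2 (hι h).symm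
    exact (hrep _ _ hne).mp (hcenter i.1 i.2)
  have hobt : ∀ i j : S, i ≠ j → ⟪v i, v j⟫ ≤ 0 := by
    intro i j hij
    have hne : i.1 ≠ j.1 := fun h => hij (Subtype.ext h)
    have hnA : ¬ A (ι i.1) (ι j.1) := hleaves i.1 j.1 hne i.2 j.2
    have := (hrep (ι i.1) (ι j.1) (fun h => hne (hι h))).not.mp hnA
    linarith [not_lt.mp this]
  have hli : LinearIndependent ℝ v := linearIndependent_of_obtuse v c hpos hobt
  have hcard : Fintype.card S ≤ f := by
    have := hli.fintype_card_le_finrank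
    rwa [finrank_euclideanSpace_fin] at this
  have hScard : Fintype.card S = M - 1 := by
    have : Fintype.card S = Fintype.card (Fin M) - 1 := by
      simp [S, Fintype.card_subtype_compl]
    simpa using this
  omega
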